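/- For every n ≥ 1, the permutation λ_n (and likewise ρ_n) is a fixed point of the bijection P: P(λ_n) = λ_n and P(ρ_n) = ρ_n. Moreover λ_n is ⊕-indecomposable and ρ_n is ⊖-indecomposable. -/

import Mathlib

/-- Stack sorting with fuel (fuel = length always suffices). -/
def stackSortAux : ℕ → List ℕ → List ℕ
  | 0, _ => []
  | _ + 1, [] => []
  | fuel + 1, x :: xs =>
    let l := x :: xs
    let m := l.foldr max 0
    stackSortAux fuel (l.takeWhile (· ≠ m)) ++
      stackSortAux fuel ((l.dropWhile (· ≠ m)).tail) ++ [m]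

/-- The stack sorting operator `S`: `S(ε) = ε` and `S(α n β) = S(α) S(β) n`
where `n` is the maximum element. -/
def stackSort (l : List ℕ) : List ℕ := stackSortAux l.length l

/-- `σ` avoids the pattern 231. -/
def Avoids231 (σ : List ℕ) : Prop :=
  ¬ ∃ i j k, i < j ∧ j < k ∧ k < σ.length ∧
      σ.getD k 0 < σ.getD i 0 ∧ σ.getD i 0 < σ.getD j 0

/-- `σ` avoids the pattern 132. -/
def Avoids132 (σ : List ℕ) : Prop :=
  ¬ ∃ i j k, i < j ∧ j < k ∧ k < σ.length ∧
      σ.getD i 0 < σ.getD k 0 ∧ σ.getD k 0 < σ.getD j 0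

/-- Binary trees with natural number labels. -/
inductive BTree where
  | leaf : BTree
  | node : BTree → ℕ → BTree → BTree

def BTree.inorder : BTree → List ℕ
  | .leaf => []
  | .node l n r => l.inorder ++ [n] ++ r.inorder

def BTree.postorder : BTree → List ℕ
  | .leaf => []
  | .node l n r => l.postorder ++ r.postorder ++ [n]

/-- A tree is decreasing when labels strictly decrease from root to leaves. -/
def BTree.Decreasing : BTree → Prop
  | .leaf => True
  | .node l n r =>
      l.Decreasing ∧ r.Decreasing ∧
      (∀ x ∈ l.inorder, x < n) ∧ (∀ x ∈ r.inorder, x < n)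

/-- The underlying unlabeled shape of a tree (labels replaced by `0`). -/
def BTree.shape : BTree → BTree
  | .leaf => .leaf
  | .node l _ r => .node l.shape 0 r.shape

def BTree.map (f : ℕ → ℕ) : BTree → BTree
  | .leaf => .leaf
  | .node l n r => .node (l.map f) (f n) (r.map f)

/-- Labels on the rightmost branch from the root. -/
def BTree.rightBranch : BTree → List ℕ
  | .leaf => []
  | .node _ n r => n :: r.rightBranch

/-- Labels on the leftmost branch from the root. -/
def BTree.leftBranch : BTree → List ℕ
  | .leaf => []
  | .node l n _ => n :: l.leftBranch

def TinAux : ℕ → List ℕ → BTree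
  | 0, _ => .leaf
  | _ + 1, [] => .leaf
  | fuel + 1, x :: xs =>
    let l := x :: xs
    let m := l.foldr max 0
    .node (TinAux fuel (l.takeWhile (· ≠ m))) m
          (TinAux fuel ((l.dropWhile (· ≠ m)).tail))

/-- The decreasing binary tree whose in-order reading is `l`. -/
def Tin (l : List ℕ) : BTree := TinAux l.length l

def PpermAux : ℕ → List ℕ → List ℕ
  | 0, _ => []
  | _ + 1, [] => []
  | fuel + 1, x :: xs =>
    let l := x :: xs
    let m := l.foldr max 0
    let α := l.takeWhile (· ≠ m)
    let β := (l.dropWhile (· ≠ m)).tail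
    (PpermAux fuel α).map (· + β.length) ++ [m] ++
      PpermAux fuel (β.map (· - α.length))

/-- The bijection `P` from 231-avoiding to 132-avoiding permutations,
`P(ε) = ε` and `P(α ⊕ (1 ⊖ β)) = (P(α) ⊕ 1) ⊖ P(β)`. -/
def Pperm (l : List ℕ) : List ℕ := PpermAux l.length l

/-- Direct sum of permutations: `α ⊕ β`. -/
def osum (α β : List ℕ) : List ℕ := α ++ β.map (· + α.length)

/-- Skew sum of permutations: `α ⊖ β`. -/
def ossum (α β : List ℕ) : List ℕ := α.map (· + β.length) ++ β

def lrP : ℕ → List ℕ × List ℕ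
  | 0 => ([], [])
  | m + 1 => (ossum [1] (lrP m).2, osum (lrP m).1 [1])

/-- `λ_n`: `λ_{m+1} = 1 ⊖ ρ_m`. -/
def lamP (n : ℕ) : List ℕ := (lrP n).1

/-- `ρ_n`: `ρ_{m+1} = λ_m ⊕ 1`. -/
def rhoP (n : ℕ) : List ℕ := (lrP n).2

/-- `s` and `p` are order isomorphic lists. -/
def OrderIsoList (s p : List ℕ) : Prop :=
  s.length = p.length ∧
  ∀ i j, i < s.length → j < s.length →
    (s.getD i 0 < s.getD j 0 ↔ p.getD i 0 < p.getD j 0)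

/-- `σ` contains the pattern `π`. -/
def Contains (σ π : List ℕ) : Prop :=
  ∃ s : List ℕ, s.Sublist σ ∧ OrderIsoList s π

/-- The up-down word of a permutation (`true` = ascent `u`, `false` = descent `d`). -/
def updown (l : List ℕ) : List Bool :=
  (l.zip l.tail).map (fun p => decide (p.1 < p.2))

/-- No value larger than `max x y` occurs (strictly) between `x` and `y` in `l`. -/
def NoLargerBetween (l : List ℕ) (x y : ℕ) : Prop :=
  ∀ i j k, i < j → j < k → k < l.length →
    ((l.getD i 0 = x ∧ l.getD k 0 = y) ∨ (l.getD i 0 = y ∧ l.getD k 0 = x)) →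
    l.getD j 0 ≤ max x y

/-- The basic operators: stack sorting `S` and reversal `R`. -/
inductive SOp where
  | s : SOp
  | r : SOp

def applyOp : SOp → List ℕ → List ℕ
  | .s => stackSort
  | .r => List.reverse

/-- A composition of operators from `{S, R}`. -/
def applyOps (ops : List SOp) : List ℕ → List ℕ :=
  ops.foldr (fun op f => applyOp op ∘ f) id

/-- `i` is the position of a left-to-right maximum of `l`. -/
def LRmaxPos (l : List ℕ) (i : ℕ) : Prop :=
  i < l.length ∧ ∀ j, j < i → l.getD j 0 < l.getD i 0

/-- `i` is the position of a right-to-left maximum of `l`. -/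
def RLmaxPos (l : List ℕ) (i : ℕ) : Prop :=
  i < l.length ∧ ∀ j, i < j → j < l.length → l.getD j 0 < l.getD i 0

/-- The reverse Zeilberger statistic: the largest `k` such that
`(n-k+1) … (n-1) n` is a subword of `l`, where `n = l.length`. -/
noncomputable def Rzeil (l : List ℕ) : ℕ :=
  sSup {k | (List.range' (l.length - k + 1) k).Sublist l}

/-!
`λ_{n+1} = (n+1) :: ρ_n` starts with its maximum and `ρ_{n+1} = λ_n ++ [n+1]` ends with it.
So the recursion of `P` splits off this maximum with one side empty, `P(1 ⊖ β) = 1 ⊖ P(β)` and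
`P(α ⊕ 1) = P(α) ⊕ 1`, and both fixed-point identities follow by a joint induction. The same
shapes exclude decompositions: the first entry of `α ⊕ β` is at most `|α| < n`, and the last
entry of `α ⊖ β` is at most `|β| < n`.
-/

theorem lamP_succ_eq_ossum (n : ℕ) : lamP (n + 1) = ossum [1] (rhoP n) := rfl

theorem rhoP_succ_eq_osum (n : ℕ) : rhoP (n + 1) = osum (lamP n) [1] := rfl

mutual
theorem length_lamP : ∀ n, (lamP n).length = n
  | 0 => rfl
  | n + 1 => by simp [lamP_succ_eq_ossum, ossum, length_rhoP n]

theorem length_rhoP : ∀ n, (rhoP n).length = n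
  | 0 => rfl
  | n + 1 => by simp [rhoP_succ_eq_osum, osum, length_lamP n]
end

theorem lamP_succ (n : ℕ) : lamP (n + 1) = (n + 1) :: rhoP n := by
  simp [lamP_succ_eq_ossum, ossum, length_rhoP, Nat.add_comm]

theorem rhoP_succ (n : ℕ) : rhoP (n + 1) = lamP n ++ [n + 1] := by
  simp [rhoP_succ_eq_osum, osum, length_lamP, Nat.add_comm]

mutual
theorem le_of_mem_lamP : ∀ {n x : ℕ}, x ∈ lamP n → x ≤ n
  | 0, _, h => by simp [lamP, lrP] at h
  | n + 1, x, h => by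
    rw [lamP_succ, List.mem_cons] at h
    rcases h with rfl | h
    · rfl
    · exact (le_of_mem_rhoP h).trans n.le_succ

theorem le_of_mem_rhoP : ∀ {n x : ℕ}, x ∈ rhoP n → x ≤ n
  | 0, _, h => by simp [rhoP, lrP] at h
  | n + 1, x, h => by
    rw [rhoP_succ, List.mem_append, List.mem_singleton] at h
    rcases h with h | rfl
    · exact (le_of_mem_lamP h).trans n.le_succ
    · rfl
end

theorem foldr_max_append_cons {α β : List ℕ} {m : ℕ} (hα : ∀ x ∈ α, x < m)
    (hβ : ∀ x ∈ β, x < m) : (α ++ m :: β).foldr max 0 = m := by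
  refine le_antisymm (List.max_le_of_forall_le _ _ fun x hx => ?_)
    (List.le_max_of_le (by simp) le_rfl)
  simp only [List.mem_append, List.mem_cons] at hx
  rcases hx with hx | rfl | hx
  exacts [(hα x hx).le, le_rfl, (hβ x hx).le]

theorem ppermAux_nil (fuel : ℕ) : PpermAux fuel [] = [] := by
  cases fuel <;> rfl

theorem ppermAux_append_cons {α β : List ℕ} {m : ℕ} (hα : ∀ x ∈ α, x < m)
    (hβ : ∀ x ∈ β, x < m) (fuel : ℕ) :
    PpermAux (fuel + 1) (α ++ m :: β) =
      (PpermAux fuel α).map (· + β.length) ++ [m] ++ PpermAux fuel (β.map (· - α.length)) := by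
  have hmax := foldr_max_append_cons hα hβ
  have hne : ∀ x ∈ α, decide (x ≠ m) = true := fun x hx => decide_eq_true (hα x hx).ne
  have htake : (α ++ m :: β).takeWhile (· ≠ m) = α := by
    rw [List.takeWhile_append_of_pos hne, List.takeWhile_cons_of_neg (by simp), List.append_nil]
  have hdrop : (α ++ m :: β).dropWhile (· ≠ m) = m :: β := by
    rw [List.dropWhile_append, if_pos (by simpa [List.dropWhile_eq_nil_iff] using hne),
      List.dropWhile_cons_of_neg (by simp)]
  obtain ⟨x, xs, hxs⟩ :=
    List.exists_cons_of_ne_nil (List.append_ne_nil_of_right_ne_nil α (List.cons_ne_nil m β))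
  rw [hxs] at hmax htake hdrop ⊢
  simp only [PpermAux, hmax, htake, hdrop, List.tail_cons]

theorem pperm_cons {β : List ℕ} {m : ℕ} (hβ : ∀ x ∈ β, x < m) :
    Pperm (m :: β) = m :: Pperm β := by
  simpa [Pperm, ppermAux_nil] using ppermAux_append_cons (α := []) (by simp) hβ β.length

theorem pperm_concat {α : List ℕ} {m : ℕ} (hα : ∀ x ∈ α, x < m) :
    Pperm (α ++ [m]) = Pperm α ++ [m] := by
  simpa [Pperm, ppermAux_nil] using ppermAux_append_cons hα (β := []) (by simp) α.length

mutual
theorem pperm_lamP : ∀ n, Pperm (lamP n) = lamP n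
  | 0 => rfl
  | n + 1 => by
    rw [lamP_succ, pperm_cons fun x hx => Nat.lt_succ_of_le (le_of_mem_rhoP hx), pperm_rhoP n]

theorem pperm_rhoP : ∀ n, Pperm (rhoP n) = rhoP n
  | 0 => rfl
  | n + 1 => by
    rw [rhoP_succ, pperm_concat fun x hx => Nat.lt_succ_of_le (le_of_mem_lamP hx), pperm_lamP n]
end

def IsSumDecomposable (σ : List ℕ) : Prop :=
  ∃ α β : List ℕ, α ≠ [] ∧ β ≠ [] ∧
    α.Perm (List.range' 1 α.length) ∧ β.Perm (List.range' 1 β.length) ∧ σ = osum α β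

def IsSkewDecomposable (σ : List ℕ) : Prop :=
  ∃ α β : List ℕ, α ≠ [] ∧ β ≠ [] ∧
    α.Perm (List.range' 1 α.length) ∧ β.Perm (List.range' 1 β.length) ∧ σ = ossum α β

theorem le_length_of_perm_range' {α : List ℕ} (hα : α.Perm (List.range' 1 α.length)) {x : ℕ}
    (hx : x ∈ α) : x ≤ α.length := by
  have := List.mem_range'_1.1 (hα.mem_iff.1 hx)
  omega

theorem not_isSumDecomposable_length_succ_cons (l : List ℕ) :
    ¬ IsSumDecomposable ((l.length + 1) :: l) := by
  rintro ⟨_ | ⟨a, α⟩, β, hα, hβ, hpα, -, h⟩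
  · exact hα rfl
  have hlen : l.length = α.length + β.length := by simpa [osum] using congrArg List.length h
  obtain ⟨rfl, -⟩ : l.length + 1 = a ∧ _ := by simpa [osum] using h
  have ha := le_length_of_perm_range' hpα (List.mem_cons_self ..)
  have := List.length_pos_iff.2 hβ
  simp only [List.length_cons] at ha
  omega

theorem not_isSkewDecomposable_concat_length_succ (l : List ℕ) :
    ¬ IsSkewDecomposable (l ++ [l.length + 1]) := by
  rintro ⟨α, β, hα, hβ, -, hpβ, h⟩
  obtain ⟨β, b, rfl⟩ := (List.eq_nil_or_concat' β).resolve_left hβ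
  have hlen : l.length + 1 = α.length + (β.length + 1) := by
    simpa [ossum] using congrArg List.length h
  rw [ossum, ← List.append_assoc] at h
  obtain ⟨-, hb⟩ := List.append_inj' h rfl
  have hb' := le_length_of_perm_range' hpβ (List.mem_concat_self ..)
  have := List.length_pos_iff.2 hα
  simp only [List.cons.injEq, List.length_append, List.length_singleton] at hb hb'
  omega

/-- `λ_n` and `ρ_n` are fixed points of `P`; moreover `λ_n` is
`⊕`-indecomposable and `ρ_n` is `⊖`-indecomposable. -/
theorem lamP_rhoP_fixed_points :
    ∀ n : ℕ, 1 ≤ n →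
      Pperm (lamP n) = lamP n ∧ Pperm (rhoP n) = rhoP n ∧
      (¬ ∃ α β : List ℕ, α ≠ [] ∧ β ≠ [] ∧
        α.Perm (List.range' 1 α.length) ∧ β.Perm (List.range' 1 β.length) ∧
        lamP n = osum α β) ∧
      (¬ ∃ α β : List ℕ, α ≠ [] ∧ β ≠ [] ∧
        α.Perm (List.range' 1 α.length) ∧ β.Perm (List.range' 1 β.length) ∧
        rhoP n = ossum α β) := by
  rintro (_ | n) hn
  · exact absurd hn (by decide)
  refine ⟨pperm_lamP _, pperm_rhoP _, ?_, ?_⟩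
  · have h := not_isSumDecomposable_length_succ_cons (rhoP n)
    rwa [length_rhoP, ← lamP_succ] at h
  · have h := not_isSkewDecomposable_concat_length_succ (lamP n)
    rwa [length_lamP, ← rhoP_succ] at h
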